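/- arXiv:1105.1213 — 3 statements merged into one kernel-verified Lean document; each statement's English description precedes it below -/
import Mathlib

section
/- For the graph of f = T₀ + ε e^{-3R/λ} (T₀ ≠ 0, ε small) in (-dT² + sinh²(T/λ)ğ_H), the mean curvature satisfies tr_g K = (3/λ)coth(T₀/λ) - (12ε/λ²) sinh^{-2}(T₀/λ) e^{-5R/λ} + O(e^{-6R/λ}) as R → ∞; equivalently tr_g K · sinh(T₀/λ) - (3/λ)cosh(T₀/λ) = -(12ε/(λ² sinh(T₀/λ))) e^{-5R/λ} + O(e^{-6R/λ}). -/
/-!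
Write everything in `x = e^{-R/λ}`, which tends to `0` as `R → ∞`: then `f = T₀ + ε x³`,
`f' = -(3ε/λ) x³`, `f'' = (9ε/λ²) x³` and `coth(R/λ) = (1 + x²)/(1 - x²)`, so `tr_g K` is an
explicit function of `x` and the claim is an expansion at `x = 0`. Since `|∇f|² = O(x⁶)`, the
factor `μ` is `1 + O(x⁶)`. The Hessian trace is `f'' + 2 coth(R/λ) f'/λ = (3ε/λ²) x³ - (12ε/λ²) x⁵
+ O(x⁷)`, and its `x³` term cancels against the first-order Taylor term of
`3 coth(f/λ)/λ = 3 coth(T₀/λ)/λ - (3ε/λ²) sinh⁻²(T₀/λ) x³ + O(x⁶)`, leaving the `x⁵` term.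
-/

open Asymptotics Filter Real Topology

theorem Asymptotics.IsBigO.mul_tendsto {α : Type*} {l : Filter α} {f g k : α → ℝ} {L : ℝ}
    (hf : f =O[l] k) (hg : Tendsto g l (𝓝 L)) : (fun t => f t * g t) =O[l] k := by
  simpa using hf.mul (hg.isBigO_one ℝ)

theorem Asymptotics.isBigO_pow_pow_of_le {𝕜 : Type*} [NormedDivisionRing 𝕜] {m n : ℕ}
    (h : n ≤ m) : (fun x : 𝕜 => x ^ m) =O[𝓝 0] fun x => x ^ n := by
  rcases h.eq_or_lt with rfl | h
  · exact isBigO_refl _ _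
  · exact (isLittleO_pow_pow h).isBigO

theorem Asymptotics.IsBigO.exists_forall_ge_abs_le {f g : ℝ → ℝ} (h : f =O[atTop] g)
    (hg : ∀ R, 0 ≤ g R) : ∃ C R₀ : ℝ, ∀ R, R₀ ≤ R → |f R| ≤ C * g R := by
  obtain ⟨C, hC⟩ := h.bound
  obtain ⟨R₀, hR₀⟩ := eventually_atTop.1 hC
  exact ⟨C, R₀, fun R hR => by simpa [abs_of_nonneg (hg R)] using hR₀ R hR⟩

theorem AnalyticAt.isBigO_sub_sub_smul_deriv {𝕜 F : Type*} [NontriviallyNormedField 𝕜]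
    [NormedAddCommGroup F] [NormedSpace 𝕜 F] {f : 𝕜 → F} {a : 𝕜} (hf : AnalyticAt 𝕜 f a) :
    (fun y => f y - f a - (y - a) • deriv f a) =O[𝓝 a] fun y => (y - a) ^ 2 := by
  obtain ⟨p, hp⟩ := hf
  have h := (hp.isBigO_sub_partialSum_pow 2).comp_tendsto
    (tendsto_sub_nhds_zero_iff.2 (tendsto_id (x := 𝓝 a)))
  have hsum (z : 𝕜) : p.partialSum 2 z = f a + z • deriv f a := by
    simp [FormalMultilinearSeries.partialSum, Finset.sum_range_succ, hp.deriv,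
      show p.coeff 0 = f a from hp.coeff_zero _]
  refine (h.congr' (Eventually.of_forall fun y => ?_) (Eventually.of_forall fun y => ?_)).trans
    (isBigO_refl (fun y => (y - a) ^ 2) _).norm_left
  · simp [hsum, sub_add_eq_sub_sub]
  · simp

theorem Real.hasDerivAt_cosh_div_sinh {a : ℝ} (ha : sinh a ≠ 0) :
    HasDerivAt (fun y => cosh y / sinh y) (-(sinh a ^ 2)⁻¹) a := by
  refine ((hasDerivAt_cosh a).div (hasDerivAt_sinh a) ha).congr_deriv ?_
  field_simp
  linear_combination -cosh_sq a

theorem Real.cosh_div_sinh_eq (y : ℝ) :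
    cosh y / sinh y = (1 + exp (-y) ^ 2) / (1 - exp (-y) ^ 2) := by
  have h : exp y * exp (-y) = 1 := by rw [← exp_add, add_neg_cancel, exp_zero]
  rw [cosh_eq, sinh_eq, ← mul_div_mul_right _ _ (by positivity : 2 * exp (-y) ≠ 0)]
  congr 1 <;> linear_combination h

theorem Real.hasDerivAt_exp_mul_div (k lam R : ℝ) :
    HasDerivAt (fun R => exp (k * R / lam)) (k / lam * exp (k * R / lam)) R := by
  simpa [mul_comm, mul_div_assoc] using ((hasDerivAt_id R).const_mul k |>.div_const lam).exp

theorem Real.exp_neg_nat_mul_div (n : ℕ) (R lam : ℝ) :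
    exp (-n * R / lam) = exp (-R / lam) ^ n := by
  rw [← exp_nat_mul]
  ring_nf

theorem Real.tendsto_exp_neg_div_atTop {lam : ℝ} (hlam : 0 < lam) :
    Tendsto (fun R => exp (-R / lam)) atTop (𝓝 0) := by
  refine (tendsto_exp_neg_atTop_nhds_zero.comp (tendsto_id.atTop_div_const hlam)).congr
    fun R => ?_
  simp [neg_div]

noncomputable section

namespace HyperbolicGraph

/- In the variable `x = e^{-R/λ}`: `height` is `f/λ`, `warp` is `ρ = sinh(f/λ)`, `warpDeriv` is
`ρ' = cosh(f/λ)/λ`, `slope` is `f'` and `lorentzFactor` is `μ`; in `meanCurvature`,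
`9ε/λ² x³` is `f''` and `(1 + x²)/(1 - x²)` is `coth(R/λ)`. -/

variable (lam T₀ ε : ℝ)

def height (x : ℝ) : ℝ := T₀ / lam + ε / lam * x ^ 3

def warp (x : ℝ) : ℝ := sinh (height lam T₀ ε x)

def warpDeriv (x : ℝ) : ℝ := cosh (height lam T₀ ε x) / lam

def slope (x : ℝ) : ℝ := -(3 * ε / lam) * x ^ 3

def lorentzFactor (x : ℝ) : ℝ :=
  (1 - slope lam ε x ^ 2 / warp lam T₀ ε x ^ 2) ^ (-(1 / 2) : ℝ)

def meanCurvature (x : ℝ) : ℝ :=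
  lorentzFactor lam T₀ ε x / warp lam T₀ ε x ^ 2
      * (9 * ε / lam ^ 2 * x ^ 3 + 2 * ((1 + x ^ 2) / (1 - x ^ 2) / lam * slope lam ε x)
        + lorentzFactor lam T₀ ε x ^ 2 / warp lam T₀ ε x ^ 2 * slope lam ε x ^ 2
          * (9 * ε / lam ^ 2 * x ^ 3))
    + (4 * lorentzFactor lam T₀ ε x - lorentzFactor lam T₀ ε x ^ 3)
      * warpDeriv lam T₀ ε x / warp lam T₀ ε x

variable {lam T₀}

theorem deriv_graph {f : ℝ → ℝ} (hf : ∀ R, f R = T₀ + ε * exp (-3 * R / lam)) :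
    deriv f = fun R => -(3 * ε / lam) * exp (-3 * R / lam) := by
  funext R
  rw [funext hf, (((hasDerivAt_exp_mul_div _ _ R).const_mul ε).const_add T₀).deriv]
  ring

theorem deriv_deriv_graph {f : ℝ → ℝ} (hf : ∀ R, f R = T₀ + ε * exp (-3 * R / lam)) :
    deriv (deriv f) = fun R => 9 * ε / lam ^ 2 * exp (-3 * R / lam) := by
  funext R
  rw [deriv_graph ε hf, ((hasDerivAt_exp_mul_div _ _ R).const_mul _).deriv]
  ring

theorem tendsto_height : Tendsto (height lam T₀ ε) (𝓝 0) (𝓝 (T₀ / lam)) := by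
  have : Continuous (height lam T₀ ε) := by unfold height; fun_prop
  simpa [height] using this.tendsto 0

theorem height_sub_isBigO : (fun x => height lam T₀ ε x - T₀ / lam) =O[𝓝 0] (· ^ 3) := by
  simpa [height] using (isBigO_refl (fun x : ℝ => x ^ 3) _).const_mul_left (ε / lam)

theorem tendsto_warp : Tendsto (warp lam T₀ ε) (𝓝 0) (𝓝 (sinh (T₀ / lam))) :=
  (continuous_sinh.tendsto _).comp (tendsto_height ε)

/- Splitting `coth(R/λ) = 1 + 2x² + 2x⁴/(1 - x²)` isolates the `x³` and `x⁵` terms; each summand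
on the right is then `O(x⁶)` for its own reason. -/
theorem meanCurvature_sub_eq {x : ℝ} (hx : x ^ 2 ≠ 1) :
    meanCurvature lam T₀ ε x - (3 / lam * (cosh (T₀ / lam) / sinh (T₀ / lam))
        - 12 * ε / lam ^ 2 * (sinh (T₀ / lam) ^ 2)⁻¹ * x ^ 5)
      = (3 * ε / lam ^ 2 * x ^ 3 - 12 * ε / lam ^ 2 * x ^ 5)
          * (lorentzFactor lam T₀ ε x / warp lam T₀ ε x ^ 2 - (sinh (T₀ / lam) ^ 2)⁻¹)
        - 12 * ε / lam ^ 2 * x ^ 7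
          * (lorentzFactor lam T₀ ε x / warp lam T₀ ε x ^ 2 / (1 - x ^ 2))
        + 81 * ε ^ 3 / lam ^ 4 * x ^ 9
          * (lorentzFactor lam T₀ ε x / warp lam T₀ ε x ^ 2) ^ 2 * lorentzFactor lam T₀ ε x
        + 3 * (warpDeriv lam T₀ ε x / warp lam T₀ ε x
          - (cosh (T₀ / lam) / sinh (T₀ / lam) - ε / lam * x ^ 3 / sinh (T₀ / lam) ^ 2) / lam)
        + (lorentzFactor lam T₀ ε x - 1) * ((3 - lorentzFactor lam T₀ ε x
          - lorentzFactor lam T₀ ε x ^ 2) * (warpDeriv lam T₀ ε x / warp lam T₀ ε x)) := by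
  have hcoth : (1 + x ^ 2) / (1 - x ^ 2) = 1 + 2 * x ^ 2 + 2 * x ^ 4 / (1 - x ^ 2) := by
    field_simp [sub_ne_zero.2 hx.symm]
    ring
  rw [meanCurvature, hcoth, slope]
  ring

theorem tendsto_inv_warp_sq (hs : sinh (T₀ / lam) ≠ 0) :
    Tendsto (fun x => (warp lam T₀ ε x ^ 2)⁻¹) (𝓝 0) (𝓝 ((sinh (T₀ / lam) ^ 2)⁻¹)) :=
  ((tendsto_warp ε).pow 2).inv₀ (pow_ne_zero 2 hs)

theorem inv_warp_sq_sub_isBigO (hs : sinh (T₀ / lam) ≠ 0) :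
    (fun x => (warp lam T₀ ε x ^ 2)⁻¹ - (sinh (T₀ / lam) ^ 2)⁻¹) =O[𝓝 0] (· ^ 3) :=
  ((((hasDerivAt_sinh _).pow 2).inv (pow_ne_zero 2 hs)).isBigO_sub.comp_tendsto
    (tendsto_height ε)).trans (height_sub_isBigO ε)

theorem slope_sq_div_warp_sq_isBigO (hs : sinh (T₀ / lam) ≠ 0) :
    (fun x => slope lam ε x ^ 2 / warp lam T₀ ε x ^ 2) =O[𝓝 0] (· ^ 6) := by
  have h := ((isBigO_refl (· ^ 6) _).const_mul_left ((3 * ε / lam) ^ 2)).mul_tendsto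
    (tendsto_inv_warp_sq ε hs)
  refine h.congr_left fun x => ?_
  simp only [slope]
  ring

theorem lorentzFactor_sub_one_isBigO (hs : sinh (T₀ / lam) ≠ 0) :
    (fun x => lorentzFactor lam T₀ ε x - 1) =O[𝓝 0] (· ^ 6) := by
  have hg : HasDerivAt (fun w : ℝ => (1 - w) ^ (-(1 / 2) : ℝ)) (1 / 2) 0 := by
    convert ((hasDerivAt_id (0 : ℝ)).const_sub 1).rpow_const (p := -(1 / 2)) (by simp)
      using 1 <;> simp
  have hu := slope_sq_div_warp_sq_isBigO ε hs
  have hu0 := hu.trans_tendsto (by simpa using (continuous_pow 6).tendsto (0 : ℝ))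
  refine ((hg.isBigO_sub.comp_tendsto hu0).trans (hu.congr_left fun x => ?_)).congr_left
    fun x => ?_
  · simp
  · simp [lorentzFactor]

theorem tendsto_lorentzFactor (hs : sinh (T₀ / lam) ≠ 0) :
    Tendsto (lorentzFactor lam T₀ ε) (𝓝 0) (𝓝 1) := by
  have h := (lorentzFactor_sub_one_isBigO ε hs).trans_tendsto
    (by simpa using (continuous_pow 6).tendsto (0 : ℝ))
  simpa using h.add_const 1

theorem tendsto_lorentzFactor_div_warp_sq (hs : sinh (T₀ / lam) ≠ 0) :
    Tendsto (fun x => lorentzFactor lam T₀ ε x / warp lam T₀ ε x ^ 2) (𝓝 0)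
      (𝓝 ((sinh (T₀ / lam) ^ 2)⁻¹)) := by
  simpa [div_eq_mul_inv] using (tendsto_lorentzFactor ε hs).mul (tendsto_inv_warp_sq ε hs)

theorem lorentzFactor_div_warp_sq_sub_isBigO (hs : sinh (T₀ / lam) ≠ 0) :
    (fun x => lorentzFactor lam T₀ ε x / warp lam T₀ ε x ^ 2 - (sinh (T₀ / lam) ^ 2)⁻¹)
      =O[𝓝 0] (· ^ 3) := by
  have h := ((lorentzFactor_sub_one_isBigO ε hs).trans
    (isBigO_pow_pow_of_le (by norm_num : 3 ≤ 6))).mul_tendsto (tendsto_inv_warp_sq ε hs)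
  refine (h.add (inv_warp_sq_sub_isBigO ε hs)).congr_left fun x => ?_
  ring

theorem tendsto_warpDeriv_div_warp (hs : sinh (T₀ / lam) ≠ 0) :
    Tendsto (fun x => warpDeriv lam T₀ ε x / warp lam T₀ ε x) (𝓝 0)
      (𝓝 (cosh (T₀ / lam) / lam / sinh (T₀ / lam))) :=
  (((continuous_cosh.tendsto _).comp (tendsto_height ε)).div_const lam).div (tendsto_warp ε) hs

theorem warpDeriv_div_warp_sub_isBigO (hs : sinh (T₀ / lam) ≠ 0) :
    (fun x => warpDeriv lam T₀ ε x / warp lam T₀ ε x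
      - (cosh (T₀ / lam) / sinh (T₀ / lam) - ε / lam * x ^ 3 / sinh (T₀ / lam) ^ 2) / lam)
      =O[𝓝 0] (· ^ 6) := by
  have hcoth : AnalyticAt ℝ (fun y => cosh y / sinh y) (T₀ / lam) :=
    analyticAt_cosh.div analyticAt_sinh hs
  have h := (hcoth.isBigO_sub_sub_smul_deriv.comp_tendsto (tendsto_height ε)).trans
    ((height_sub_isBigO ε).pow 2)
  rw [(hasDerivAt_cosh_div_sinh hs).deriv] at h
  refine ((h.const_mul_left lam⁻¹).congr_right fun x => ?_).congr_left fun x => ?_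
  · ring
  · simp only [Function.comp, warpDeriv, warp, height, smul_eq_mul]
    ring

theorem meanCurvature_sub_isBigO (hs : sinh (T₀ / lam) ≠ 0) :
    (fun x => meanCurvature lam T₀ ε x - (3 / lam * (cosh (T₀ / lam) / sinh (T₀ / lam))
        - 12 * ε / lam ^ 2 * (sinh (T₀ / lam) ^ 2)⁻¹ * x ^ 5)) =O[𝓝 0] (· ^ 6) := by
  have hM := tendsto_lorentzFactor_div_warp_sq ε hs
  have hμ := tendsto_lorentzFactor ε hs
  have hx : ∀ᶠ x : ℝ in 𝓝 0, x ^ 2 ≠ 1 :=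
    ((continuous_pow 2).tendsto' 0 0 (by norm_num)).eventually_ne (by norm_num)
  have h₁ : (fun x : ℝ => (3 * ε / lam ^ 2 * x ^ 3 - 12 * ε / lam ^ 2 * x ^ 5)
      * (lorentzFactor lam T₀ ε x / warp lam T₀ ε x ^ 2 - (sinh (T₀ / lam) ^ 2)⁻¹))
      =O[𝓝 0] (· ^ 6) := by
    have h := ((isBigO_refl (· ^ 3) _).const_mul_left (3 * ε / lam ^ 2)).sub
      ((isBigO_pow_pow_of_le (by norm_num : 3 ≤ 5)).const_mul_left (12 * ε / lam ^ 2))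
      |>.mul (lorentzFactor_div_warp_sq_sub_isBigO ε hs)
    exact h.congr_right fun x => by ring
  have h₂ : (fun x : ℝ => 12 * ε / lam ^ 2 * x ^ 7
      * (lorentzFactor lam T₀ ε x / warp lam T₀ ε x ^ 2 / (1 - x ^ 2))) =O[𝓝 0] (· ^ 6) :=
    ((isBigO_pow_pow_of_le (by norm_num)).const_mul_left _).mul_tendsto
      (hM.div ((continuous_pow 2).tendsto 0 |>.const_sub 1) (by norm_num))
  have h₃ : (fun x : ℝ => 81 * ε ^ 3 / lam ^ 4 * x ^ 9
      * (lorentzFactor lam T₀ ε x / warp lam T₀ ε x ^ 2) ^ 2 * lorentzFactor lam T₀ ε x)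
      =O[𝓝 0] (· ^ 6) :=
    (((isBigO_pow_pow_of_le (by norm_num)).const_mul_left _).mul_tendsto (hM.pow 2)).mul_tendsto hμ
  have h₄ := (warpDeriv_div_warp_sub_isBigO ε hs).const_mul_left 3
  have h₅ := (lorentzFactor_sub_one_isBigO ε hs).mul_tendsto
    ((((tendsto_const_nhds (x := (3 : ℝ))).sub hμ).sub (hμ.pow 2)).mul
      (tendsto_warpDeriv_div_warp ε hs))
  exact ((((h₁.sub h₂).add h₃).add h₄).add h₅).congr' (hx.mono fun x hx =>
    (meanCurvature_sub_eq ε hx).symm) EventuallyEq.rfl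

end HyperbolicGraph

end

open HyperbolicGraph in
theorem mean_curvature_of_hyperbolic_graph_general (lam T₀ ε : ℝ) (hlam : 0 < lam)
    (hT₀ : T₀ ≠ 0)
    (f : ℝ → ℝ) (hf : ∀ R, f R = T₀ + ε * Real.exp (-3 * R / lam))
    (μ : ℝ → ℝ)
    (hμ : ∀ R, μ R = (1 - (deriv f R)^2 / (Real.sinh (f R / lam))^2) ^ (-(1/2) : ℝ))
    (H11 H22 : ℝ → ℝ)
    (hH11 : ∀ R, H11 R = deriv (deriv f) R)
    (hH22 : ∀ R, H22 R
      = (Real.cosh (R / lam) / Real.sinh (R / lam) / lam) * deriv f R)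
    (trK : ℝ → ℝ)
    (htrK : ∀ R, trK R
      = μ R / (Real.sinh (f R / lam))^2
          * ((H11 R + H22 R + H22 R)
            + (μ R)^2 / (Real.sinh (f R / lam))^2 * (deriv f R)^2 * H11 R)
        - (μ R)^3 * (Real.cosh (f R / lam) / lam) / Real.sinh (f R / lam)
        + 4 * μ R * (Real.cosh (f R / lam) / lam) / Real.sinh (f R / lam)) :
    (∃ C R₀ : ℝ, ∀ R, R₀ ≤ R →
      |trK R - ((3 / lam) * (Real.cosh (T₀ / lam) / Real.sinh (T₀ / lam))
          - (12 * ε / lam^2) * ((Real.sinh (T₀ / lam))^2)⁻¹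
            * Real.exp (-5 * R / lam))|
        ≤ C * Real.exp (-6 * R / lam)) ∧
    (∃ C R₀ : ℝ, ∀ R, R₀ ≤ R →
      |trK R * Real.sinh (T₀ / lam) - (3 / lam) * Real.cosh (T₀ / lam)
          - (-(12 * ε / (lam^2 * Real.sinh (T₀ / lam))) * Real.exp (-5 * R / lam))|
        ≤ C * Real.exp (-6 * R / lam)) := by
  have hs : sinh (T₀ / lam) ≠ 0 := sinh_ne_zero.2 (div_ne_zero hT₀ hlam.ne')
  have h3 (R : ℝ) : exp (-3 * R / lam) = exp (-R / lam) ^ 3 := mod_cast exp_neg_nat_mul_div 3 R lam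
  have h5 (R : ℝ) : exp (-5 * R / lam) = exp (-R / lam) ^ 5 := mod_cast exp_neg_nat_mul_div 5 R lam
  have h6 (R : ℝ) : exp (-6 * R / lam) = exp (-R / lam) ^ 6 := mod_cast exp_neg_nat_mul_div 6 R lam
  have htrK_eq (R : ℝ) : trK R = meanCurvature lam T₀ ε (exp (-R / lam)) := by
    rw [htrK, hH11, hH22, hμ, deriv_deriv_graph ε hf, deriv_graph ε hf]
    simp only [hf, h3, cosh_div_sinh_eq, ← neg_div, meanCurvature, lorentzFactor, warp, warpDeriv,
      HyperbolicGraph.slope, height, add_div, mul_div_right_comm ε]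
    ring
  have hO : (fun R => trK R - ((3 / lam) * (cosh (T₀ / lam) / sinh (T₀ / lam))
      - (12 * ε / lam ^ 2) * (sinh (T₀ / lam) ^ 2)⁻¹ * exp (-5 * R / lam)))
      =O[atTop] fun R => exp (-6 * R / lam) :=
    ((meanCurvature_sub_isBigO ε hs).comp_tendsto (tendsto_exp_neg_div_atTop hlam)).congr
      (fun R => by rw [Function.comp_apply, htrK_eq, h5]) (fun R => (h6 R).symm)
  refine ⟨hO.exists_forall_ge_abs_le fun R => (exp_pos _).le, ?_⟩
  refine ((hO.const_mul_left (sinh (T₀ / lam))).congr_left fun R => ?_).exists_forall_ge_abs_le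
    fun R => (exp_pos _).le
  field_simp
  ring

/-- For the graph of `f = T₀ + ε e^{-3R/λ}` (`T₀ ≠ 0`, `ε` small enough
that the graph is spacelike) in `(-dT² + sinh²(T/λ)ğ_H)`, the mean curvature
`tr_g K = μρ⁻²(ĝ^{ij} + μ²ρ⁻²∇ⁱf∇ʲf)∇²ᵢⱼf - μ³ρ'ρ⁻¹ + 4μρ'ρ⁻¹` (with `ρ = sinh(f/λ)`,
`ρ' = (1/λ)cosh(f/λ)`, frame Hessian `∇²₁₁f = f''`,
`∇²₂₂f = ∇²₃₃f = (1/λ)coth(R/λ)f'`, `∇ⁱf∇ʲf` only nonzero for `i=j=1`, `n = 3`)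
satisfies `tr_g K = (3/λ)coth(T₀/λ) - (12ε/λ²)sinh^{-2}(T₀/λ)e^{-5R/λ} + O(e^{-6R/λ})`;
equivalently
`tr_g K sinh(T₀/λ) - (3/λ)cosh(T₀/λ) = -(12ε/(λ²sinh(T₀/λ)))e^{-5R/λ} + O(e^{-6R/λ})`. -/
theorem mean_curvature_of_hyperbolic_graph (lam T₀ ε : ℝ) (hlam : 0 < lam)
    (hT₀ : T₀ ≠ 0)
    (f : ℝ → ℝ) (hf : ∀ R, f R = T₀ + ε * Real.exp (-3 * R / lam))
    (hspacelike : ∀ R, 0 ≤ R → (deriv f R)^2 < (Real.sinh (f R / lam))^2)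
    (μ : ℝ → ℝ)
    (hμ : ∀ R, μ R = (1 - (deriv f R)^2 / (Real.sinh (f R / lam))^2) ^ (-(1/2) : ℝ))
    (H11 H22 : ℝ → ℝ)
    (hH11 : ∀ R, H11 R = deriv (deriv f) R)
    (hH22 : ∀ R, H22 R
      = (Real.cosh (R / lam) / Real.sinh (R / lam) / lam) * deriv f R)
    (trK : ℝ → ℝ)
    (htrK : ∀ R, trK R
      = μ R / (Real.sinh (f R / lam))^2
          * ((H11 R + H22 R + H22 R)
            + (μ R)^2 / (Real.sinh (f R / lam))^2 * (deriv f R)^2 * H11 R)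
        - (μ R)^3 * (Real.cosh (f R / lam) / lam) / Real.sinh (f R / lam)
        + 4 * μ R * (Real.cosh (f R / lam) / lam) / Real.sinh (f R / lam)) :
    (∃ C R₀ : ℝ, ∀ R, R₀ ≤ R →
      |trK R - ((3 / lam) * (Real.cosh (T₀ / lam) / Real.sinh (T₀ / lam))
          - (12 * ε / lam^2) * ((Real.sinh (T₀ / lam))^2)⁻¹
            * Real.exp (-5 * R / lam))|
        ≤ C * Real.exp (-6 * R / lam)) ∧
    (∃ C R₀ : ℝ, ∀ R, R₀ ≤ R →
      |trK R * Real.sinh (T₀ / lam) - (3 / lam) * Real.cosh (T₀ / lam)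
          - (-(12 * ε / (lam^2 * Real.sinh (T₀ / lam))) * Real.exp (-5 * R / lam))|
        ≤ C * Real.exp (-6 * R / lam)) :=
  mean_curvature_of_hyperbolic_graph_general lam T₀ ε hlam hT₀ f hf μ hμ H11 H22 hH11 hH22 trK htrK
end

section
/- For f = T₀ + ε e^{-3R/λ} (T₀ ≠ 0) and the graph metric g in (-dT² + sinh²(T/λ)ğ_H), set H = sinh(T₀/λ), ḡ = H⁻²g, a = ḡ - ğ_H. Then in the ğ_H-orthonormal frame, a_ij = (2ε/λ)coth(T₀/λ) e^{-3R/λ} δ_ij + O(e^{-6R/λ}) as R → ∞. -/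
/-!
With `t = T₀/λ` and `u = (ε/λ) e^{-3R/λ}` we have `f/λ = t + u`, and
`sinh²(t+u) - sinh²t - 2u sinh t cosh t = (cosh(2t+2u) - cosh 2t - 2u sinh 2t)/2`
is a second-order Taylor remainder of `cosh`, hence `O(u²) = O(e^{-6R/λ})` once `|u| ≤ 1/2`.
Dividing by `sinh²t` gives the diagonal entries of `a`; the extra term `-(9ε²/λ²)e^{-6R/λ}`
of `g₁₁` is already of the order of the error, and the off-diagonal entries vanish.
-/

open Real Filter Topology

lemma abs_cosh_add_sub_le {x h : ℝ} (hh : |h| ≤ 1) :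
    |cosh (x + h) - cosh x - h * sinh x| ≤ cosh x * h ^ 2 := by
  have hpos := abs_exp_sub_one_sub_id_le hh
  have hneg := abs_exp_sub_one_sub_id_le (x := -h) (by rwa [abs_neg])
  have hsplit : cosh (x + h) - cosh x - h * sinh x
      = (exp x * (exp h - 1 - h) + exp (-x) * (exp (-h) - 1 - -h)) / 2 := by
    rw [cosh_eq, cosh_eq, sinh_eq, neg_add, exp_add, exp_add]
    ring
  rw [hsplit, cosh_eq, abs_div, abs_two]
  calc |exp x * (exp h - 1 - h) + exp (-x) * (exp (-h) - 1 - -h)| / 2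
      ≤ (exp x * h ^ 2 + exp (-x) * h ^ 2) / 2 := by
        gcongr
        refine (abs_add_le _ _).trans (add_le_add ?_ ?_)
        · rw [abs_mul, abs_of_pos (exp_pos x)]; gcongr
        · rw [abs_mul, abs_of_pos (exp_pos _), ← neg_sq]; gcongr
    _ = (exp x + exp (-x)) / 2 * h ^ 2 := by ring

lemma abs_sinh_sq_add_sub_le {t u : ℝ} (hu : |u| ≤ 1 / 2) :
    |sinh (t + u) ^ 2 - sinh t ^ 2 - 2 * u * (sinh t * cosh t)| ≤ 2 * cosh (2 * t) * u ^ 2 := by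
  have h2u : |2 * u| ≤ 1 := by rw [abs_mul, abs_two]; linarith
  have hsq (y : ℝ) : sinh y ^ 2 = (cosh (2 * y) - 1) / 2 := by
    rw [cosh_two_mul, cosh_sq]; ring
  have hsplit : sinh (t + u) ^ 2 - sinh t ^ 2 - 2 * u * (sinh t * cosh t)
      = (cosh (2 * t + 2 * u) - cosh (2 * t) - 2 * u * sinh (2 * t)) / 2 := by
    rw [hsq, hsq, sinh_two_mul, mul_add]; ring
  rw [hsplit, abs_div, abs_two]
  linarith [abs_cosh_add_sub_le (x := 2 * t) h2u]

lemma abs_inv_sinh_sq_mul_sub_le {t u ν κ : ℝ} (ht : sinh t ≠ 0) (hu : |u| ≤ 1 / 2)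
    (hν : 0 ≤ ν) (hνκ : ν ≤ κ) :
    |(sinh t ^ 2)⁻¹ * (sinh (t + u) ^ 2 - ν) - 1 - 2 * u * (cosh t / sinh t)|
      ≤ (2 * cosh (2 * t) * u ^ 2 + κ) / sinh t ^ 2 := by
  have hsplit : (sinh t ^ 2)⁻¹ * (sinh (t + u) ^ 2 - ν) - 1 - 2 * u * (cosh t / sinh t)
      = (sinh (t + u) ^ 2 - sinh t ^ 2 - 2 * u * (sinh t * cosh t) - ν) / sinh t ^ 2 := by
    field_simp
    ring
  have hs2 : 0 < sinh t ^ 2 := by positivity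
  rw [hsplit, abs_div, abs_of_pos hs2, div_le_div_iff_of_pos_right hs2]
  calc _ ≤ _ + |ν| := abs_sub _ _
    _ ≤ _ := add_le_add (abs_sinh_sq_add_sub_le hu) ((abs_of_nonneg hν).trans_le hνκ)

lemma eventually_abs_mul_exp_neg_div_lt (c : ℝ) {k lam r : ℝ} (hk : 0 < k) (hlam : 0 < lam)
    (hr : 0 < r) : ∀ᶠ R in atTop, |c * exp (-k * R / lam)| < r := by
  have hexp : Tendsto (fun R => exp (-k * R / lam)) atTop (𝓝 0) := by
    simp_rw [neg_mul, neg_div]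
    exact tendsto_exp_neg_atTop_nhds_zero.comp
      ((tendsto_id.const_mul_atTop hk).atTop_div_const hlam)
  simpa using ((hexp.const_mul c).abs).eventually_lt_const (by simpa using hr)

/-- For `f = T₀ + ε e^{-3R/λ}` (`T₀ ≠ 0`) and the induced metric of the
graph in `(-dT² + sinh²(T/λ)ğ_H)`, whose ğ_H-orthonormal-frame components are
`g₁₁ = sinh²(f/λ) - (9ε²/λ²)e^{-6R/λ}`, `g₂₂ = g₃₃ = sinh²(f/λ)` (others zero), set
`H = sinh(T₀/λ)`, `ḡ = H⁻²g`, `a = ḡ - ğ_H`. Then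
`aᵢⱼ = (2ε/λ)coth(T₀/λ)e^{-3R/λ}δᵢⱼ + O(e^{-6R/λ})` as `R → ∞`. -/
theorem metric_asymptotics_of_hyperbolic_graph (lam T₀ ε : ℝ) (hlam : 0 < lam)
    (hT₀ : T₀ ≠ 0)
    (f : ℝ → ℝ) (hf : ∀ R, f R = T₀ + ε * Real.exp (-3 * R / lam))
    (g : Fin 3 → Fin 3 → ℝ → ℝ)
    (hg11 : ∀ R, g 0 0 R
      = (Real.sinh (f R / lam))^2 - (9 * ε^2 / lam^2) * Real.exp (-6 * R / lam))
    (hg22 : ∀ R, g 1 1 R = (Real.sinh (f R / lam))^2)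
    (hg33 : ∀ R, g 2 2 R = (Real.sinh (f R / lam))^2)
    (hgoff : ∀ (i j : Fin 3) R, i ≠ j → g i j R = 0)
    (a : Fin 3 → Fin 3 → ℝ → ℝ)
    (ha : ∀ i j R, a i j R
      = ((Real.sinh (T₀ / lam))^2)⁻¹ * g i j R - (if i = j then 1 else 0)) :
    ∃ C R₀ : ℝ, ∀ R, R₀ ≤ R → ∀ i j : Fin 3,
      |a i j R - (2 * ε / lam) * (Real.cosh (T₀ / lam) / Real.sinh (T₀ / lam))
          * Real.exp (-3 * R / lam) * (if i = j then 1 else 0)|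
        ≤ C * Real.exp (-6 * R / lam) := by
  set t := T₀ / lam
  have hs : sinh t ≠ 0 := sinh_ne_zero.2 (div_ne_zero hT₀ hlam.ne')
  obtain ⟨R₀, hR₀⟩ := eventually_atTop.1
    (eventually_abs_mul_exp_neg_div_lt (ε / lam) three_pos hlam one_half_pos)
  refine ⟨(2 * cosh (2 * t) * (ε / lam) ^ 2 + 9 * ε ^ 2 / lam ^ 2) / sinh t ^ 2,
    R₀, fun R hR i j => ?_⟩
  set u := ε / lam * exp (-3 * R / lam) with hu
  have hexp : exp (-6 * R / lam) = exp (-3 * R / lam) ^ 2 := by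
    rw [sq, ← exp_add]; ring_nf
  have hfR : f R / lam = t + u := by rw [hf, hu]; ring
  rcases eq_or_ne i j with rfl | hij
  · obtain ⟨ν, hgν, hν, hνκ⟩ : ∃ ν, g i i R = sinh (t + u) ^ 2 - ν ∧ 0 ≤ ν ∧
        ν ≤ 9 * ε ^ 2 / lam ^ 2 * exp (-6 * R / lam) := by
      fin_cases i
      exacts [⟨_, hfR ▸ hg11 R, by positivity, le_rfl⟩,
        ⟨0, by rw [sub_zero, ← hfR]; exact hg22 R, le_rfl, by positivity⟩,
        ⟨0, by rw [sub_zero, ← hfR]; exact hg33 R, le_rfl, by positivity⟩]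
    calc _ = |(sinh t ^ 2)⁻¹ * (sinh (t + u) ^ 2 - ν) - 1 - 2 * u * (cosh t / sinh t)| := by
          rw [ha, hgν, if_pos rfl, hu]; ring_nf
      _ ≤ _ := abs_inv_sinh_sq_mul_sub_le hs (hR₀ R hR).le hν hνκ
      _ = _ := by rw [hu, hexp]; ring
  · simp only [ha, hgoff i j R hij, if_neg hij, mul_zero, sub_zero, abs_zero]
    positivity
end

section
/- For the hyperbolic graph f = T₀ + ε e^{-3R/λ}, the total energy-momentum E^H_ν = (H²/16π) lim_{R→∞} ∮_{S_R} E n^ν e^{R/λ} λ² sinh²(R/λ) sinθ dθ dψ (with H = sinh(T₀/λ), E the mass aspect = (16ε/λ²)tanh(T₀/2λ)e^{-3R/λ} + O(e^{-5R/λ})) equals E^H_0 = ε tanh(T₀/(2λ)) sinh²(T₀/λ) and E^H_k = 0 for k = 1,2,3. In particular E^H_0 < 0 whenever εT₀ < 0. -/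
open Filter Topology intervalIntegral

lemma exp_neg_mul_tendsto (c : ℝ) (hc : 0 < c) :
    Tendsto (fun R : ℝ => Real.exp (-c * R)) atTop (𝓝 0) := by
  have h1 : Tendsto (fun R : ℝ => -c * R) atTop atBot := by
    simpa using (tendsto_const_mul_atBot_of_neg (neg_neg_iff_pos.mpr hc)).mpr
      (tendsto_id (α := ℝ))
  exact Real.tendsto_exp_atBot.comp h1

lemma key_tendsto (lam A C R₀ : ℝ) (hlam : 0 < lam) (E : ℝ → ℝ)
    (hE : ∀ R, R₀ ≤ R →
      |E R - A * Real.exp (-3 * R / lam)| ≤ C * Real.exp (-5 * R / lam)) :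
    Tendsto (fun R : ℝ => E R * Real.exp (R / lam) * (Real.sinh (R / lam))^2)
      atTop (𝓝 (A / 4)) := by
  have hC : 0 ≤ C := by
    have h := hE R₀ le_rfl
    have h2 := Real.exp_pos (-5 * R₀ / lam)
    nlinarith [abs_nonneg (E R₀ - A * Real.exp (-3 * R₀ / lam))]
  -- main term
  have hg2 : Tendsto (fun R : ℝ =>
      A * ((1 - Real.exp (-2 * R / lam)) / 2)^2) atTop (𝓝 (A / 4)) := by
    have h0 : Tendsto (fun R : ℝ => Real.exp (-2 * R / lam)) atTop (𝓝 0) := by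
      have := exp_neg_mul_tendsto (2 / lam) (by positivity)
      refine this.congr fun R => ?_
      ring_nf
    have h := ((((tendsto_const_nhds (x := (1:ℝ))).sub h0).div_const 2).pow 2).const_mul A
    convert h using 2
    norm_num
    ring
  -- error term
  have hg1 : Tendsto (fun R : ℝ =>
      (E R - A * Real.exp (-3 * R / lam)) * Real.exp (R / lam)
        * (Real.sinh (R / lam))^2) atTop (𝓝 0) := by
    apply squeeze_zero_norm' (a := fun R => C / 4 * Real.exp (-2 * R / lam))
    · filter_upwards [eventually_ge_atTop (max R₀ 0)] with R hR
      have hR₀ : R₀ ≤ R := le_trans (le_max_left _ _) hR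
      have hR0 : 0 ≤ R := le_trans (le_max_right _ _) hR
      have hx : 0 ≤ R / lam := by positivity
      have hs0 : 0 ≤ Real.sinh (R / lam) := Real.sinh_nonneg_iff.mpr hx
      have hs : Real.sinh (R / lam) ≤ Real.exp (R / lam) / 2 := by
        rw [Real.sinh_eq]
        have := Real.exp_pos (-(R / lam))
        linarith
      have hsq : (Real.sinh (R / lam))^2 ≤ (Real.exp (R / lam))^2 / 4 := by
        nlinarith
      have habs := hE R hR₀
      have hep : (0:ℝ) < Real.exp (R / lam) := Real.exp_pos _
      have key : |E R - A * Real.exp (-3 * R / lam)| * Real.exp (R / lam)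
          * (Real.sinh (R / lam))^2
          ≤ C / 4 * Real.exp (-2 * R / lam) := by
        have h1 : |E R - A * Real.exp (-3 * R / lam)| * Real.exp (R / lam)
            * (Real.sinh (R / lam))^2
            ≤ (C * Real.exp (-5 * R / lam)) * Real.exp (R / lam)
              * ((Real.exp (R / lam))^2 / 4) := by
          have hb2 : 0 ≤ C * Real.exp (-5 * R / lam) :=
            mul_nonneg hC (Real.exp_pos _).le
          have h0' : (0:ℝ) ≤ Real.exp (R / lam) * (Real.sinh (R / lam))^2 := by
            positivity
          have hle : Real.exp (R / lam) * (Real.sinh (R / lam))^2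
              ≤ Real.exp (R / lam) * ((Real.exp (R / lam))^2 / 4) :=
            mul_le_mul_of_nonneg_left hsq hep.le
          have := mul_le_mul habs hle h0' hb2
          nlinarith [this]
        have h2 : (C * Real.exp (-5 * R / lam)) * Real.exp (R / lam)
              * ((Real.exp (R / lam))^2 / 4)
            = C / 4 * Real.exp (-2 * R / lam) := by
          have hexp : Real.exp (-5 * R / lam) * Real.exp (R / lam)
              * (Real.exp (R / lam))^2 = Real.exp (-2 * R / lam) := by
            rw [pow_two, ← Real.exp_add, ← Real.exp_add, ← Real.exp_add]
            congr 1
            field_simp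
            ring
          linear_combination (C / 4) * hexp
        linarith
      calc ‖(E R - A * Real.exp (-3 * R / lam)) * Real.exp (R / lam)
          * (Real.sinh (R / lam))^2‖
          = |E R - A * Real.exp (-3 * R / lam)| * Real.exp (R / lam)
            * (Real.sinh (R / lam))^2 := by
            rw [Real.norm_eq_abs, abs_mul, abs_mul, abs_of_pos hep,
              abs_of_nonneg (sq_nonneg (Real.sinh (R / lam)))]
        _ ≤ _ := key
    · have := (exp_neg_mul_tendsto (2 / lam) (by positivity)).const_mul (C / 4)
      simp only [mul_zero] at this
      refine this.congr fun R => ?_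
      ring_nf
  have := hg1.add hg2
  rw [zero_add] at this
  refine this.congr fun R => ?_
  have hid : A * Real.exp (-3 * R / lam) * Real.exp (R / lam)
      * (Real.sinh (R / lam))^2 = A * ((1 - Real.exp (-2 * R / lam)) / 2)^2 := by
    rw [Real.sinh_eq]
    have e1 : Real.exp (-3 * R / lam) * Real.exp (R / lam) = Real.exp (-2 * R / lam) := by
      rw [← Real.exp_add]; ring_nf
    have e2 : Real.exp (-2 * R / lam) * Real.exp (R / lam) = Real.exp (-(R/lam)) := by
      rw [← Real.exp_add]; ring_nf
    have e3 : Real.exp (-(R/lam)) * Real.exp (R / lam) = 1 := by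
      rw [← Real.exp_add]; simp
    have e4 : Real.exp (-(R/lam)) * Real.exp (-(R/lam)) = Real.exp (-2 * R / lam) := by
      rw [← Real.exp_add]; ring_nf
    linear_combination (A * (Real.exp (R/lam) - Real.exp (-(R/lam)))^2 / 4) * e1
      + (A * Real.exp (R/lam) / 4 - A * Real.exp (-(R/lam)) / 2) * e2
      + (A / 4) * e3 + (A * (Real.exp (-2*R/lam) - 2) / 4) * e4
  linear_combination -hid

theorem total_energy_momentum_of_hyperbolic_graph (lam T₀ ε : ℝ) (hlam : 0 < lam)
    (hT₀ : T₀ ≠ 0)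
    (E : ℝ → ℝ)
    (hE : ∃ C R₀ : ℝ, ∀ R, R₀ ≤ R →
      |E R - (16 * ε / lam^2) * Real.tanh (T₀ / (2 * lam)) * Real.exp (-3 * R / lam)|
        ≤ C * Real.exp (-5 * R / lam))
    (n : Fin 4 → ℝ → ℝ → ℝ)
    (hn : ∀ θ ψ, n 0 θ ψ = 1 ∧ n 1 θ ψ = Real.sin θ * Real.cos ψ
      ∧ n 2 θ ψ = Real.sin θ * Real.sin ψ ∧ n 3 θ ψ = Real.cos θ)
    (EH : Fin 4 → ℝ)
    (hEH : ∀ ν, Tendsto (fun R : ℝ =>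
        (Real.sinh (T₀ / lam))^2 / (16 * Real.pi)
          * ∫ θ in (0:ℝ)..Real.pi, ∫ ψ in (0:ℝ)..(2 * Real.pi),
              E R * n ν θ ψ * Real.exp (R / lam) * lam^2 * (Real.sinh (R / lam))^2
                * Real.sin θ)
      atTop (𝓝 (EH ν))) :
    EH 0 = ε * Real.tanh (T₀ / (2 * lam)) * (Real.sinh (T₀ / lam))^2 ∧
    (∀ k : Fin 4, k ≠ 0 → EH k = 0) ∧
    (ε * T₀ < 0 → EH 0 < 0) := by
  obtain ⟨C, R₀, hEb⟩ := hE
  set A : ℝ := (16 * ε / lam^2) * Real.tanh (T₀ / (2 * lam)) with hA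
  have hkey := key_tendsto lam A C R₀ hlam E hEb
  have hn0 : ∀ θ ψ, n 0 θ ψ = 1 := fun θ ψ => (hn θ ψ).1
  have hn1 : ∀ θ ψ, n 1 θ ψ = Real.sin θ * Real.cos ψ := fun θ ψ => (hn θ ψ).2.1
  have hn2 : ∀ θ ψ, n 2 θ ψ = Real.sin θ * Real.sin ψ := fun θ ψ => (hn θ ψ).2.2.1
  have hn3 : ∀ θ ψ, n 3 θ ψ = Real.cos θ := fun θ ψ => (hn θ ψ).2.2.2
  -- value of the double integral for ν = 0
  have hval0 : ∀ R : ℝ,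
      (∫ θ in (0:ℝ)..Real.pi, ∫ ψ in (0:ℝ)..(2 * Real.pi),
        E R * n 0 θ ψ * Real.exp (R / lam) * lam^2 * (Real.sinh (R / lam))^2
          * Real.sin θ)
      = 4 * Real.pi * (E R * Real.exp (R / lam) * lam^2 * (Real.sinh (R / lam))^2) := by
    intro R
    simp only [hn0, mul_one]
    have hinner : ∀ θ : ℝ,
        (∫ ψ in (0:ℝ)..(2 * Real.pi),
          E R * Real.exp (R / lam) * lam^2 * (Real.sinh (R / lam))^2 * Real.sin θ)
        = 2 * Real.pi * (E R * Real.exp (R / lam) * lam^2 * (Real.sinh (R / lam))^2)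
          * Real.sin θ := by
      intro θ
      rw [intervalIntegral.integral_const]
      simp [smul_eq_mul]; ring
    rw [intervalIntegral.integral_congr (fun θ _ => hinner θ)]
    rw [intervalIntegral.integral_const_mul, integral_sin]
    simp; ring
  have hlim0 : Tendsto (fun R : ℝ =>
      (Real.sinh (T₀ / lam))^2 / (16 * Real.pi)
        * ∫ θ in (0:ℝ)..Real.pi, ∫ ψ in (0:ℝ)..(2 * Real.pi),
            E R * n 0 θ ψ * Real.exp (R / lam) * lam^2 * (Real.sinh (R / lam))^2
              * Real.sin θ)
      atTop (𝓝 (ε * Real.tanh (T₀ / (2 * lam)) * (Real.sinh (T₀ / lam))^2)) := by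
    have h := (hkey.const_mul ((Real.sinh (T₀ / lam))^2 * lam^2 / 4))
    have heq : (Real.sinh (T₀ / lam))^2 * lam^2 / 4 * (A / 4)
        = ε * Real.tanh (T₀ / (2 * lam)) * (Real.sinh (T₀ / lam))^2 := by
      rw [hA]; field_simp; ring
    rw [heq] at h
    refine h.congr fun R => ?_
    rw [hval0 R]
    have hπ : Real.pi ≠ 0 := Real.pi_ne_zero
    field_simp
    ring
  have hEH0 : EH 0 = ε * Real.tanh (T₀ / (2 * lam)) * (Real.sinh (T₀ / lam))^2 :=
    tendsto_nhds_unique (hEH 0) hlim0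
  -- vanishing for k = 1, 2, 3
  have hzero : ∀ k : Fin 4, k ≠ 0 → EH k = 0 := by
    intro k hk
    have hint : ∀ R : ℝ,
        (∫ θ in (0:ℝ)..Real.pi, ∫ ψ in (0:ℝ)..(2 * Real.pi),
          E R * n k θ ψ * Real.exp (R / lam) * lam^2 * (Real.sinh (R / lam))^2
            * Real.sin θ) = 0 := by
      have h1 : ∀ R : ℝ,
          (∫ θ in (0:ℝ)..Real.pi, ∫ ψ in (0:ℝ)..(2 * Real.pi),
            E R * n 1 θ ψ * Real.exp (R / lam) * lam^2 * (Real.sinh (R / lam))^2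
              * Real.sin θ) = 0 := by
        intro R
        set c : ℝ := E R * Real.exp (R / lam) * lam^2 * (Real.sinh (R / lam))^2 with hc
        have hinner : ∀ θ : ℝ,
            (∫ ψ in (0:ℝ)..(2 * Real.pi),
              E R * n 1 θ ψ * Real.exp (R / lam) * lam^2 * (Real.sinh (R / lam))^2
                * Real.sin θ) = 0 := by
          intro θ
          have : (fun ψ => E R * n 1 θ ψ * Real.exp (R / lam) * lam^2
              * (Real.sinh (R / lam))^2 * Real.sin θ)
              = fun ψ => (c * Real.sin θ * Real.sin θ) * Real.cos ψ := by
            funext ψ; rw [hn1, hc]; ring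
          rw [this, intervalIntegral.integral_const_mul, integral_cos]
          simp [Real.sin_two_pi]
        rw [intervalIntegral.integral_congr (fun θ _ => hinner θ)]
        simp
      have h2 : ∀ R : ℝ,
          (∫ θ in (0:ℝ)..Real.pi, ∫ ψ in (0:ℝ)..(2 * Real.pi),
            E R * n 2 θ ψ * Real.exp (R / lam) * lam^2 * (Real.sinh (R / lam))^2
              * Real.sin θ) = 0 := by
        intro R
        set c : ℝ := E R * Real.exp (R / lam) * lam^2 * (Real.sinh (R / lam))^2 with hc
        have hinner : ∀ θ : ℝ,
            (∫ ψ in (0:ℝ)..(2 * Real.pi),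
              E R * n 2 θ ψ * Real.exp (R / lam) * lam^2 * (Real.sinh (R / lam))^2
                * Real.sin θ) = 0 := by
          intro θ
          have : (fun ψ => E R * n 2 θ ψ * Real.exp (R / lam) * lam^2
              * (Real.sinh (R / lam))^2 * Real.sin θ)
              = fun ψ => (c * Real.sin θ * Real.sin θ) * Real.sin ψ := by
            funext ψ; rw [hn2, hc]; ring
          rw [this, intervalIntegral.integral_const_mul, integral_sin]
          simp [Real.cos_two_pi]
        rw [intervalIntegral.integral_congr (fun θ _ => hinner θ)]
        simp
      have h3 : ∀ R : ℝ,
          (∫ θ in (0:ℝ)..Real.pi, ∫ ψ in (0:ℝ)..(2 * Real.pi),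
            E R * n 3 θ ψ * Real.exp (R / lam) * lam^2 * (Real.sinh (R / lam))^2
              * Real.sin θ) = 0 := by
        intro R
        set c : ℝ := E R * Real.exp (R / lam) * lam^2 * (Real.sinh (R / lam))^2 with hc
        have hinner : ∀ θ : ℝ,
            (∫ ψ in (0:ℝ)..(2 * Real.pi),
              E R * n 3 θ ψ * Real.exp (R / lam) * lam^2 * (Real.sinh (R / lam))^2
                * Real.sin θ)
            = (2 * Real.pi * c) * (Real.sin θ * Real.cos θ) := by
          intro θ
          have : (fun ψ : ℝ => E R * n 3 θ ψ * Real.exp (R / lam) * lam^2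
              * (Real.sinh (R / lam))^2 * Real.sin θ)
              = fun _ : ℝ => c * Real.cos θ * Real.sin θ := by
            funext ψ; rw [hn3, hc]; ring
          rw [this, intervalIntegral.integral_const]
          simp [smul_eq_mul]; ring
        rw [intervalIntegral.integral_congr (fun θ _ => hinner θ)]
        rw [intervalIntegral.integral_const_mul, integral_sin_mul_cos₁]
        simp
      fin_cases k
      · exact absurd rfl hk
      · exact h1
      · exact h2
      · exact h3
    have : Tendsto (fun R : ℝ =>
        (Real.sinh (T₀ / lam))^2 / (16 * Real.pi)
          * ∫ θ in (0:ℝ)..Real.pi, ∫ ψ in (0:ℝ)..(2 * Real.pi),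
              E R * n k θ ψ * Real.exp (R / lam) * lam^2 * (Real.sinh (R / lam))^2
                * Real.sin θ)
        atTop (𝓝 0) := by
      have heq : (fun R : ℝ =>
          (Real.sinh (T₀ / lam))^2 / (16 * Real.pi)
            * ∫ θ in (0:ℝ)..Real.pi, ∫ ψ in (0:ℝ)..(2 * Real.pi),
                E R * n k θ ψ * Real.exp (R / lam) * lam^2 * (Real.sinh (R / lam))^2
                  * Real.sin θ) = fun _ => 0 := by
        funext R; rw [hint R]; ring
      rw [heq]; exact tendsto_const_nhds
    exact tendsto_nhds_unique (hEH k) this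
  refine ⟨hEH0, hzero, ?_⟩
  intro hεT
  rw [hEH0]
  have hs2 : 0 < (Real.sinh (T₀ / lam))^2 := by
    have : Real.sinh (T₀ / lam) ≠ 0 := by
      rw [Real.sinh_ne_zero]
      exact div_ne_zero hT₀ hlam.ne'
    positivity
  have htanh : ε * Real.tanh (T₀ / (2 * lam)) < 0 := by
    have hcosh : 0 < Real.cosh (T₀ / (2 * lam)) := Real.cosh_pos _
    rw [Real.tanh_eq_sinh_div_cosh]
    rcases lt_or_gt_of_ne hT₀ with hT | hT
    · have hεpos : 0 < ε := by nlinarith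
      have : Real.sinh (T₀ / (2 * lam)) < 0 := by
        rw [Real.sinh_neg_iff]
        exact div_neg_of_neg_of_pos hT (by positivity)
      have := div_neg_of_neg_of_pos this hcosh
      nlinarith
    · have hεneg : ε < 0 := by nlinarith
      have : 0 < Real.sinh (T₀ / (2 * lam)) := by
        rw [Real.sinh_pos_iff]
        exact div_pos hT (by positivity)
      have := div_pos this hcosh
      nlinarith
  nlinarith
end
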